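/- The degenerate r-Whitney numbers of the first kind satisfy V_{m,λ}^{(r+1)}(n,l) = Σ_{k=l}^{n} C(k,l) (−1)^{k−l} ⟨1⟩_{k−l,λ} V_{m,λ}^{(r)}(n,k), where ⟨1⟩_{j,λ} = 1·(1+λ)···(1+(j−1)λ) is the generalized rising factorial of 1. -/

import Mathlib

/-!
The degenerate falling factorials are of binomial type:
`(a + b)_{k,λ} = ∑ C(k,i) (a)_{i,λ} (b)_{k-i,λ}`. Taking `b = -1`, where
`(-1)_{j,λ} = (-1)^j ⟨1⟩_{j,λ}`, expands `(z - 1)_{k,λ}` in the `(z)_{l,λ}`. Putting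
`z = m x + r + 1` in the relations defining `V^{(r)}` and `V^{(r+1)}` gives two expansions of
`m^n (x)_n` in the `(z)_{l,λ}`, and these are polynomials in `z` of degree `l`, hence linearly
independent, so the coefficients agree.
-/

open Finset

/-- generalized falling factorial: (x)_{n,λ} = x(x-λ)···(x-(n-1)λ) -/
def dff (lam x : ℝ) (n : ℕ) : ℝ := ∏ i ∈ Finset.range n, (x - i * lam)

/-- generalized rising factorial: ⟨x⟩_{n,λ} = x(x+λ)···(x+(n-1)λ) -/
def drf (lam x : ℝ) (n : ℕ) : ℝ := ∏ i ∈ Finset.range n, (x + i * lam)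

open Polynomial

lemma dff_succ (lam x : ℝ) (n : ℕ) : dff lam x (n + 1) = dff lam x n * (x - n * lam) :=
  prod_range_succ _ _

theorem dff_add (lam a b : ℝ) (k : ℕ) :
    dff lam (a + b) k =
      ∑ ij ∈ antidiagonal k, (k.choose ij.1 : ℝ) * (dff lam a ij.1 * dff lam b ij.2) := by
  induction k with
  | zero => simp [dff]
  | succ k ih =>
    rw [dff_succ, ih, sum_antidiagonal_choose_succ_mul (fun i j ↦ dff lam a i * dff lam b j),
      ← sum_add_distrib, sum_mul]
    refine sum_congr rfl fun ij hij ↦ ?_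
    rw [HasAntidiagonal.mem_antidiagonal] at hij
    rw [Nat.choose_symm_of_eq_add hij.symm, dff_succ, dff_succ, ← hij]
    push_cast
    ring

lemma dff_neg_one (lam : ℝ) (j : ℕ) : dff lam (-1) j = (-1) ^ j * drf lam 1 j := by
  rw [dff, drf, ← congrArg ((-1 : ℝ) ^ ·) (card_range j), ← prod_neg]
  exact prod_congr rfl fun i _ ↦ by ring

lemma dff_sub_one (lam y : ℝ) (k : ℕ) :
    dff lam (y - 1) k = ∑ l ∈ range (k + 1),
      (k.choose l : ℝ) * (-1) ^ (k - l) * drf lam 1 (k - l) * dff lam y l := by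
  rw [sub_eq_add_neg, dff_add,
    Nat.sum_antidiagonal_eq_sum_range_succ
      (fun i j ↦ (k.choose i : ℝ) * (dff lam y i * dff lam (-1) j))]
  exact sum_congr rfl fun l _ ↦ by rw [dff_neg_one]; ring

noncomputable def dffSeq (lam : ℝ) : Polynomial.Sequence ℝ where
  elems' n := ∏ i ∈ range n, (X - C ((i : ℝ) * lam))
  degree_eq' n := by
    rw [degree_prod]
    simp only [degree_X_sub_C, sum_const, card_range, nsmul_eq_mul, mul_one]

lemma eval_dffSeq (lam y : ℝ) (n : ℕ) : (dffSeq lam n).eval y = dff lam y n := by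
  simp [dffSeq, dff, eval_prod]

theorem eq_of_sum_mul_dff_eq (lam : ℝ) {n : ℕ} {a b : ℕ → ℝ}
    (h : ∀ y, ∑ l ∈ range (n + 1), a l * dff lam y l = ∑ l ∈ range (n + 1), b l * dff lam y l) :
    ∀ l ≤ n, a l = b l := by
  have hzero : ∑ l ∈ range (n + 1), (a l - b l) • dffSeq lam l = 0 := by
    refine Polynomial.funext fun y ↦ ?_
    simp [eval_finsetSum, eval_dffSeq, sub_mul, sum_sub_distrib, h y]
  intro l hl
  exact sub_eq_zero.mp <|
    linearIndependent_iff'.mp (dffSeq lam).linearIndependent _ _ hzero l (mem_range.mpr (by omega))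

theorem stmt14 (m : ℕ) (hm : 0 < m) (r : ℕ) (lam : ℝ) (Vr Vr1 : ℕ → ℕ → ℝ)
    (hVr : ∀ n : ℕ, ∀ x : ℝ,
      (m : ℝ) ^ n * dff 1 x n = ∑ k ∈ range (n + 1), Vr n k * dff lam ((m : ℝ) * x + r) k)
    (hVr1 : ∀ n : ℕ, ∀ x : ℝ,
      (m : ℝ) ^ n * dff 1 x n = ∑ k ∈ range (n + 1), Vr1 n k * dff lam ((m : ℝ) * x + (r + 1)) k) :
    ∀ n l : ℕ, l ≤ n →
      Vr1 n l = ∑ k ∈ Finset.Icc l n,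
        (k.choose l : ℝ) * (-1 : ℝ) ^ (k - l) * drf lam 1 (k - l) * Vr n k := by
  intro n
  refine eq_of_sum_mul_dff_eq lam fun z ↦ ?_
  obtain ⟨x, hx⟩ : ∃ x : ℝ, (m : ℝ) * x + r = z - 1 :=
    ⟨(z - 1 - r) / m, by field_simp; ring⟩
  calc ∑ l ∈ range (n + 1), Vr1 n l * dff lam z l
      = ∑ k ∈ range (n + 1), Vr n k * dff lam (z - 1) k := by
        rw [← hx, ← hVr, hVr1, ← add_assoc, hx, sub_add_cancel]
    _ = ∑ k ∈ range (n + 1), ∑ l ∈ range (k + 1),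
          Vr n k * ((k.choose l : ℝ) * (-1) ^ (k - l) * drf lam 1 (k - l) * dff lam z l) := by
        simp_rw [dff_sub_one, mul_sum]
    _ = _ := by
        rw [sum_comm' (t' := range (n + 1)) (s' := fun l ↦ Icc l n)
          (fun k l ↦ by simp only [mem_range, mem_Icc]; omega)]
        simp_rw [sum_mul]
        exact sum_congr rfl fun l _ ↦ sum_congr rfl fun k _ ↦ by ring
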